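/- Let A ∈ ℝ^{m×n} (m ≤ n) with largest singular value σ₁ and smallest singular value σ_m, let ε > 0, and let 0 < λ ≤ σ_m² + ε. Then for all vectors u, v ∈ ℝⁿ with |supp(u) ∪ supp(v)| ≤ k, one has |⟨u, (I − λ(AᵀA + εI)⁻¹AᵀA)v⟩| ≤ (δ_k + σ₁² − λσ₁²/(σ₁² + ε)) · ‖u‖₂ · ‖v‖₂, where δ_k is the restricted isometry constant of A of order k. -/

import Mathlib

open Matrix

/-- The Euclidean (ℓ₂) norm of a vector in ℝ^d. -/
noncomputable def l2 {d : ℕ} (v : Fin d → ℝ) : ℝ := Real.sqrt (∑ i, v i ^ 2)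

/-- The restricted isometry constant of order `k` of a matrix `A`: the smallest `δ ≥ 0`
such that `(1 - δ)‖x‖² ≤ ‖Ax‖² ≤ (1 + δ)‖x‖²` for all `k`-sparse vectors `x`. -/
noncomputable def RIC {m n : ℕ} (A : Matrix (Fin m) (Fin n) ℝ) (k : ℕ) : ℝ :=
  sInf {δ : ℝ | 0 ≤ δ ∧ ∀ x : Fin n → ℝ, (Function.support x).ncard ≤ k →
    (1 - δ) * l2 x ^ 2 ≤ l2 (A *ᵥ x) ^ 2 ∧ l2 (A *ᵥ x) ^ 2 ≤ (1 + δ) * l2 x ^ 2}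

namespace Stmt4Aux

lemma l2_sq {d : ℕ} (v : Fin d → ℝ) : l2 v ^ 2 = ∑ i, v i ^ 2 := by
  rw [l2, Real.sq_sqrt (by positivity)]

lemma l2_nonneg {d : ℕ} (v : Fin d → ℝ) : 0 ≤ l2 v := Real.sqrt_nonneg _

lemma dot_self {d : ℕ} (v : Fin d → ℝ) : v ⬝ᵥ v = l2 v ^ 2 := by
  rw [l2_sq]; simp [dotProduct, pow_two]

lemma eq_zero_of_l2 {d : ℕ} {v : Fin d → ℝ} (h : l2 v = 0) : v = 0 := by
  have h2 : ∑ i, v i ^ 2 = 0 := by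
    have := congrArg (· ^ 2) h
    simpa [l2_sq] using this
  funext i
  have := (Finset.sum_eq_zero_iff_of_nonneg (fun i _ => sq_nonneg (v i))).1 h2 i
    (Finset.mem_univ i)
  exact pow_eq_zero_iff (by norm_num) |>.1 this

lemma l2_smul {d : ℕ} {c : ℝ} (hc : 0 ≤ c) (v : Fin d → ℝ) : l2 (c • v) = c * l2 v := by
  rw [l2, l2]
  simp_rw [Pi.smul_apply, smul_eq_mul, mul_pow, ← Finset.mul_sum]
  rw [Real.sqrt_mul (sq_nonneg c), Real.sqrt_sq hc]

lemma cs_abs {d : ℕ} (p q : Fin d → ℝ) : ∑ i, |p i| * |q i| ≤ l2 p * l2 q := by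
  have h := Finset.sum_mul_sq_le_sq_mul_sq Finset.univ (fun i => |p i|) (fun i => |q i|)
  simp_rw [sq_abs] at h
  have h1 : 0 ≤ ∑ i, |p i| * |q i| :=
    Finset.sum_nonneg fun i _ => mul_nonneg (abs_nonneg _) (abs_nonneg _)
  have h2 := Real.sqrt_le_sqrt h
  rwa [Real.sqrt_sq h1, Real.sqrt_mul (by positivity), ← l2, ← l2] at h2

lemma conj_bound {d : ℕ} (U : Matrix (Fin d) (Fin d) ℝ)
    (h1 : U * Uᵀ = 1) (e : Fin d → ℝ) (c : ℝ) (hc : 0 ≤ c)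
    (he : ∀ i, |e i| ≤ c) (u v : Fin d → ℝ) :
    |u ⬝ᵥ ((U * diagonal e * Uᵀ) *ᵥ v)| ≤ c * l2 u * l2 v := by
  set p := Uᵀ *ᵥ u with hp
  set q := Uᵀ *ᵥ v with hq
  have key : u ⬝ᵥ ((U * diagonal e * Uᵀ) *ᵥ v) = ∑ i, e i * (p i * q i) := by
    rw [← mulVec_mulVec, ← mulVec_mulVec, dotProduct_mulVec, ← mulVec_transpose]
    simp only [dotProduct, mulVec_diagonal, hp, hq]
    exact Finset.sum_congr rfl fun i _ => by ring
  have norm_p : l2 p = l2 u := by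
    have hd : p ⬝ᵥ p = u ⬝ᵥ u := by
      calc p ⬝ᵥ p = (u ᵥ* U) ⬝ᵥ (Uᵀ *ᵥ u) := by rw [hp, mulVec_transpose]
      _ = ((u ᵥ* U) ᵥ* Uᵀ) ⬝ᵥ u := dotProduct_mulVec _ _ _
      _ = (u ᵥ* (U * Uᵀ)) ⬝ᵥ u := by rw [vecMul_vecMul]
      _ = u ⬝ᵥ u := by rw [h1, vecMul_one]
    have := hd
    rw [dot_self, dot_self] at this
    calc l2 p = Real.sqrt (l2 p ^ 2) := (Real.sqrt_sq (l2_nonneg p)).symm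
    _ = Real.sqrt (l2 u ^ 2) := by rw [this]
    _ = l2 u := Real.sqrt_sq (l2_nonneg u)
  have norm_q : l2 q = l2 v := by
    have hd : q ⬝ᵥ q = v ⬝ᵥ v := by
      calc q ⬝ᵥ q = (v ᵥ* U) ⬝ᵥ (Uᵀ *ᵥ v) := by rw [hq, mulVec_transpose]
      _ = ((v ᵥ* U) ᵥ* Uᵀ) ⬝ᵥ v := dotProduct_mulVec _ _ _
      _ = (v ᵥ* (U * Uᵀ)) ⬝ᵥ v := by rw [vecMul_vecMul]
      _ = v ⬝ᵥ v := by rw [h1, vecMul_one]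
    rw [dot_self, dot_self] at hd
    calc l2 q = Real.sqrt (l2 q ^ 2) := (Real.sqrt_sq (l2_nonneg q)).symm
    _ = Real.sqrt (l2 v ^ 2) := by rw [hd]
    _ = l2 v := Real.sqrt_sq (l2_nonneg v)
  rw [key]
  calc |∑ i, e i * (p i * q i)| ≤ ∑ i, |e i * (p i * q i)| := Finset.abs_sum_le_sum_abs _ _
  _ ≤ ∑ i, c * (|p i| * |q i|) := by
      refine Finset.sum_le_sum fun i _ => ?_
      rw [abs_mul, abs_mul]
      exact mul_le_mul_of_nonneg_right (he i) (by positivity)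
  _ = c * ∑ i, |p i| * |q i| := by rw [Finset.mul_sum]
  _ ≤ c * (l2 p * l2 q) := mul_le_mul_of_nonneg_left (cs_abs p q) hc
  _ = c * l2 u * l2 v := by rw [norm_p, norm_q, mul_assoc]

lemma polar {d : ℕ} (x y : Fin d → ℝ) :
    x ⬝ᵥ y = (l2 (x + y) ^ 2 - l2 (x - y) ^ 2) / 4 := by
  simp only [l2_sq, dotProduct, Pi.add_apply, Pi.sub_apply]
  rw [← Finset.sum_sub_distrib, Finset.sum_div]
  exact Finset.sum_congr rfl fun i _ => by ring

lemma par {d : ℕ} (x y : Fin d → ℝ) :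
    l2 (x + y) ^ 2 + l2 (x - y) ^ 2 = 2 * l2 x ^ 2 + 2 * l2 y ^ 2 := by
  simp only [l2_sq, Pi.add_apply, Pi.sub_apply, Finset.mul_sum]
  rw [← Finset.sum_add_distrib, ← Finset.sum_add_distrib]
  exact Finset.sum_congr rfl fun i _ => by ring

lemma mem_spectrum_of_eigen {m : ℕ} (M : Matrix (Fin m) (Fin m) ℝ) (t : ℝ) (y : Fin m → ℝ)
    (hy : y ≠ 0) (heq : M *ᵥ y = t • y) : t ∈ spectrum ℝ M := by
  rw [spectrum.mem_iff]
  intro hu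
  obtain ⟨w, hw⟩ := hu
  apply hy
  have h0 : (algebraMap ℝ (Matrix (Fin m) (Fin m) ℝ) t - M) *ᵥ y = 0 := by
    rw [Algebra.algebraMap_eq_smul_one, sub_mulVec, smul_mulVec, one_mulVec, heq, sub_self]
  calc y = 1 *ᵥ y := (one_mulVec y).symm
  _ = ((↑w⁻¹ * ↑w) : Matrix (Fin m) (Fin m) ℝ) *ᵥ y := by rw [w.inv_mul]
  _ = (↑w⁻¹ : Matrix (Fin m) (Fin m) ℝ) *ᵥ ((↑w : Matrix (Fin m) (Fin m) ℝ) *ᵥ y) :=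
      (mulVec_mulVec _ _ _).symm
  _ = (↑w⁻¹ : Matrix (Fin m) (Fin m) ℝ) *ᵥ 0 := by rw [hw, h0]
  _ = 0 := mulVec_zero _

lemma conj_mul {d : ℕ} (U X Y : Matrix (Fin d) (Fin d) ℝ) (h2 : Uᵀ * U = 1) :
    (U * X * Uᵀ) * (U * Y * Uᵀ) = U * (X * Y) * Uᵀ := by
  have h : Uᵀ * (U * (Y * Uᵀ)) = Y * Uᵀ := by rw [← mul_assoc, h2, one_mul]
  simp only [mul_assoc, h]

lemma rip_core {m n k : ℕ} (A : Matrix (Fin m) (Fin n) ℝ) {δ : ℝ} (hδ0 : 0 ≤ δ)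
    (hδ : ∀ x : Fin n → ℝ, (Function.support x).ncard ≤ k →
      (1 - δ) * l2 x ^ 2 ≤ l2 (A *ᵥ x) ^ 2 ∧ l2 (A *ᵥ x) ^ 2 ≤ (1 + δ) * l2 x ^ 2)
    (u v : Fin n → ℝ) (h : (Function.support u ∪ Function.support v).ncard ≤ k) :
    |u ⬝ᵥ v - (A *ᵥ u) ⬝ᵥ (A *ᵥ v)| ≤ δ / 2 * (l2 u ^ 2 + l2 v ^ 2) := by
  have hsub : ∀ w : Fin n → ℝ,
      Function.support w ⊆ Function.support u ∪ Function.support v →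
      |l2 w ^ 2 - l2 (A *ᵥ w) ^ 2| ≤ δ * l2 w ^ 2 := by
    intro w hw
    have hk : (Function.support w).ncard ≤ k :=
      le_trans (Set.ncard_le_ncard hw (Set.toFinite _)) h
    obtain ⟨h1, h2⟩ := hδ w hk
    rw [abs_le]
    constructor <;> nlinarith [sq_nonneg (l2 w)]
  have hsupp1 : Function.support (u + v) ⊆ Function.support u ∪ Function.support v :=
    Function.support_add u v
  have hsupp2 : Function.support (u - v) ⊆ Function.support u ∪ Function.support v :=
    Function.support_sub u v
  have e2 : (A *ᵥ u) ⬝ᵥ (A *ᵥ v) =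
      (l2 (A *ᵥ (u + v)) ^ 2 - l2 (A *ᵥ (u - v)) ^ 2) / 4 := by
    rw [mulVec_add, mulVec_sub]; exact polar _ _
  have eid : u ⬝ᵥ v - (A *ᵥ u) ⬝ᵥ (A *ᵥ v) =
      ((l2 (u + v) ^ 2 - l2 (A *ᵥ (u + v)) ^ 2)
        - (l2 (u - v) ^ 2 - l2 (A *ᵥ (u - v)) ^ 2)) / 4 := by
    rw [polar u v, e2]; ring
  rw [eid]
  have b1 := abs_le.1 (hsub (u + v) hsupp1)
  have b2 := abs_le.1 (hsub (u - v) hsupp2)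
  have hd : δ * l2 (u + v) ^ 2 + δ * l2 (u - v) ^ 2
      = 4 * (δ / 2 * (l2 u ^ 2 + l2 v ^ 2)) := by
    rw [← mul_add, par]; ring
  rw [abs_le]
  constructor <;> [linarith [b1.1, b1.2, b2.1, b2.2]; linarith [b1.1, b1.2, b2.1, b2.2]]

lemma rip_scaled {m n k : ℕ} (A : Matrix (Fin m) (Fin n) ℝ) {δ : ℝ} (hδ0 : 0 ≤ δ)
    (hδ : ∀ x : Fin n → ℝ, (Function.support x).ncard ≤ k →
      (1 - δ) * l2 x ^ 2 ≤ l2 (A *ᵥ x) ^ 2 ∧ l2 (A *ᵥ x) ^ 2 ≤ (1 + δ) * l2 x ^ 2)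
    (u v : Fin n → ℝ) (h : (Function.support u ∪ Function.support v).ncard ≤ k) :
    |u ⬝ᵥ v - (A *ᵥ u) ⬝ᵥ (A *ᵥ v)| ≤ δ * (l2 u * l2 v) := by
  rcases eq_or_ne (l2 u) 0 with hu | hu
  · rw [eq_zero_of_l2 hu]
    simpa [mulVec_zero] using mul_nonneg hδ0 (mul_nonneg (l2_nonneg _) (l2_nonneg v))
  rcases eq_or_ne (l2 v) 0 with hv | hv
  · rw [eq_zero_of_l2 hv]
    simpa [mulVec_zero] using mul_nonneg hδ0 (mul_nonneg (l2_nonneg u) (l2_nonneg _))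
  have ha : 0 < l2 u := lt_of_le_of_ne (l2_nonneg u) (Ne.symm hu)
  have hb : 0 < l2 v := lt_of_le_of_ne (l2_nonneg v) (Ne.symm hv)
  have hsupp : (Function.support (l2 v • u) ∪ Function.support (l2 u • v)).ncard ≤ k := by
    refine le_trans (Set.ncard_le_ncard ?_ (Set.toFinite _)) h
    exact Set.union_subset_union (Function.support_const_smul_subset _ _)
      (Function.support_const_smul_subset _ _)
  have key := rip_core A hδ0 hδ (l2 v • u) (l2 u • v) hsupp
  have lhs_eq : (l2 v • u) ⬝ᵥ (l2 u • v) - (A *ᵥ (l2 v • u)) ⬝ᵥ (A *ᵥ (l2 u • v))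
      = (l2 u * l2 v) * (u ⬝ᵥ v - (A *ᵥ u) ⬝ᵥ (A *ᵥ v)) := by
    rw [mulVec_smul, mulVec_smul, smul_dotProduct, dotProduct_smul,
      smul_dotProduct, dotProduct_smul]
    simp only [smul_eq_mul]
    ring
  have rhs_eq : δ / 2 * (l2 (l2 v • u) ^ 2 + l2 (l2 u • v) ^ 2)
      = (l2 u * l2 v) * (δ * (l2 u * l2 v)) := by
    rw [l2_smul hb.le u, l2_smul ha.le v]; ring
  rw [lhs_eq, rhs_eq, abs_mul, abs_of_pos (mul_pos ha hb)] at key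
  exact le_of_mul_le_mul_left key (mul_pos ha hb)

end Stmt4Aux

open Stmt4Aux in
set_option maxHeartbeats 3200000 in
/-- Lemma 3.1(i): for `0 < λ ≤ σ_m² + ε` and `|supp u ∪ supp v| ≤ k`,
`|⟨u, (I - λ(AᵀA + εI)⁻¹AᵀA)v⟩| ≤ (δ_k + σ₁² - λσ₁²/(σ₁² + ε)) ‖u‖₂ ‖v‖₂`.
Here `σ₁², σ_m²` are the largest and smallest eigenvalues of `AAᵀ`. -/
theorem stmt4 {m n k : ℕ} (hmn : m ≤ n) (A : Matrix (Fin m) (Fin n) ℝ)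
    (σ1 σm ε lam : ℝ) (hσ1 : 0 ≤ σ1) (hσm : 0 ≤ σm)
    (hσ1mem : σ1 ^ 2 ∈ spectrum ℝ (A * Aᵀ))
    (hσ1max : ∀ μ ∈ spectrum ℝ (A * Aᵀ), μ ≤ σ1 ^ 2)
    (hσmmem : σm ^ 2 ∈ spectrum ℝ (A * Aᵀ))
    (hσmmin : ∀ μ ∈ spectrum ℝ (A * Aᵀ), σm ^ 2 ≤ μ)
    (hε : 0 < ε) (hlam0 : 0 < lam) (hlam : lam ≤ σm ^ 2 + ε)
    (u v : Fin n → ℝ) (h : (Function.support u ∪ Function.support v).ncard ≤ k) :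
    |∑ i, u i * ((1 - lam • ((Aᵀ * A + ε • 1)⁻¹ * (Aᵀ * A))) *ᵥ v) i| ≤
      (RIC A k + σ1 ^ 2 - lam * σ1 ^ 2 / (σ1 ^ 2 + ε)) * l2 u * l2 v := by
  classical
  have key : ∀ (M : Matrix (Fin n) (Fin n) ℝ), (∑ i, u i * (M *ᵥ v) i) = u ⬝ᵥ (M *ᵥ v) :=
    fun M => rfl
  rw [key]
  have hAT : Aᵀ = Aᴴ := (conjTranspose_eq_transpose_of_trivial A).symm
  set S : Matrix (Fin n) (Fin n) ℝ := Aᵀ * A with hSdef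
  have hS : S.IsHermitian := by rw [hSdef, hAT]; exact isHermitian_conjTranspose_mul_self A
  have hPSD : S.PosSemidef := by rw [hSdef, hAT]; exact posSemidef_conjTranspose_mul_self A
  set d : Fin n → ℝ := hS.eigenvalues with hddef
  set U : Matrix (Fin n) (Fin n) ℝ := (hS.eigenvectorUnitary : Matrix (Fin n) (Fin n) ℝ)
    with hUdef
  have hU1 : U * Uᵀ = 1 := by
    have := Unitary.coe_mul_star_self hS.eigenvectorUnitary
    rwa [Unitary.coe_star, star_eq_conjTranspose,
      conjTranspose_eq_transpose_of_trivial] at this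
  have hU2 : Uᵀ * U = 1 := by
    have := Unitary.coe_star_mul_self hS.eigenvectorUnitary
    rwa [star_eq_conjTranspose, conjTranspose_eq_transpose_of_trivial] at this
  have hspec : S = U * diagonal d * Uᵀ := by
    have h := hS.spectral_theorem
    rw [Unitary.conjStarAlgAut_apply] at h
    rw [star_eq_conjTranspose, conjTranspose_eq_transpose_of_trivial] at h
    have hco : (RCLike.ofReal ∘ d : Fin n → ℝ) = d := by
      funext i; simp [Function.comp]
    rw [hco] at h
    exact h
  have hd0 : ∀ i, 0 ≤ d i := fun i => hPSD.eigenvalues_nonneg i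
  -- eigenvalues in spectrum of A * Aᵀ
  have heig : ∀ i, d i ≠ 0 → d i ∈ spectrum ℝ (A * Aᵀ) := by
    intro i hi
    set x : Fin n → ℝ := ⇑(hS.eigenvectorBasis i) with hxdef
    have hx : S *ᵥ x = d i • x := hS.mulVec_eigenvectorBasis i
    have hxne : x ≠ 0 := by
      intro hc
      apply hS.eigenvectorBasis.orthonormal.ne_zero i
      apply PiLp.ext
      intro j
      exact congrFun hc j
    have hyne : A *ᵥ x ≠ 0 := by
      intro h0
      have : S *ᵥ x = 0 := by
        rw [hSdef, ← mulVec_mulVec, h0, mulVec_zero]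
      rw [hx] at this
      rcases smul_eq_zero.1 this with h' | h'
      · exact hi h'
      · exact hxne h'
    apply mem_spectrum_of_eigen (A * Aᵀ) (d i) (A *ᵥ x) hyne
    calc (A * Aᵀ) *ᵥ (A *ᵥ x) = ((A * Aᵀ) * A) *ᵥ x := mulVec_mulVec _ _ _
    _ = (A * S) *ᵥ x := by rw [hSdef, Matrix.mul_assoc]
    _ = A *ᵥ (S *ᵥ x) := (mulVec_mulVec _ _ _).symm
    _ = A *ᵥ (d i • x) := by rw [hx]
    _ = d i • (A *ᵥ x) := mulVec_smul _ _ _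
  have hdle : ∀ i, d i ≤ σ1 ^ 2 := by
    intro i
    rcases eq_or_ne (d i) 0 with h0 | h0
    · rw [h0]; positivity
    · exact hσ1max _ (heig i h0)
  have hms : σm ^ 2 ≤ σ1 ^ 2 := hσ1max _ hσmmem
  -- the constant c
  set c : ℝ := σ1 ^ 2 - lam * σ1 ^ 2 / (σ1 ^ 2 + ε) with hcdef
  have hσε : (0:ℝ) < σ1 ^ 2 + ε := by positivity
  have hc : 0 ≤ c := by
    rw [hcdef, sub_nonneg, div_le_iff₀ hσε]
    nlinarith
  -- the diagonal function for N
  set f : Fin n → ℝ := fun i => d i - lam * ((d i + ε)⁻¹ * d i) with hfdef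
  have hf : ∀ i, |f i| ≤ c := by
    intro i
    have hde : (0:ℝ) < d i + ε := by have := hd0 i; linarith
    rcases eq_or_ne (d i) 0 with h0 | h0
    · have : f i = 0 := by rw [hfdef]; simp [h0]
      rw [this, abs_zero]; exact hc
    · have h1 := hσ1max _ (heig i h0)
      have h2 := hσmmin _ (heig i h0)
      have hlamd : lam ≤ d i + ε := by linarith
      have e1 : f i = d i * (d i + ε - lam) / (d i + ε) := by
        rw [hfdef]; field_simp
      have e2 : c = σ1 ^ 2 * (σ1 ^ 2 + ε - lam) / (σ1 ^ 2 + ε) := by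
        rw [hcdef]; field_simp
      rw [e1, abs_of_nonneg (div_nonneg (mul_nonneg (hd0 i) (by linarith)) hde.le), e2,
        div_le_div_iff₀ hde hσε]
      have h3 : lam * ε ≤ (σ1 ^ 2 + ε) * (d i + ε) := by
        have ha : lam ≤ d i + ε := hlamd
        have hb : ε ≤ σ1 ^ 2 + ε := by nlinarith [sq_nonneg σ1]
        calc lam * ε ≤ (d i + ε) * (σ1 ^ 2 + ε) :=
          mul_le_mul ha hb hε.le hde.le
        _ = (σ1 ^ 2 + ε) * (d i + ε) := by ring
      nlinarith [mul_nonneg (sub_nonneg.2 h1) (sub_nonneg.2 h3)]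
  -- matrix identities
  have hdiagsum : diagonal (fun i => d i + ε) = diagonal d + ε • (1 : Matrix (Fin n) (Fin n) ℝ) := by
    ext i j
    rcases eq_or_ne i j with rfl | hij
    · simp
    · simp [diagonal_apply_ne _ hij, Matrix.one_apply_ne hij]
  have hSe : S + ε • (1 : Matrix (Fin n) (Fin n) ℝ) = U * diagonal (fun i => d i + ε) * Uᵀ := by
    rw [hdiagsum, mul_add, add_mul, ← hspec]
    congr 1
    rw [mul_smul_comm, smul_mul_assoc, mul_one, hU1]
  have hinv : (S + ε • (1 : Matrix (Fin n) (Fin n) ℝ))⁻¹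
      = U * diagonal (fun i => (d i + ε)⁻¹) * Uᵀ := by
    apply inv_eq_right_inv
    rw [hSe, conj_mul _ _ _ hU2, diagonal_mul_diagonal]
    have : (fun i => (d i + ε) * (d i + ε)⁻¹) = fun _ : Fin n => (1:ℝ) := by
      funext i
      have hde : (0:ℝ) < d i + ε := by have := hd0 i; linarith
      exact mul_inv_cancel₀ hde.ne'
    rw [this, diagonal_one, mul_one, hU1]
  have hN : S - lam • ((S + ε • (1 : Matrix (Fin n) (Fin n) ℝ))⁻¹ * S)
      = U * diagonal f * Uᵀ := by
    rw [hinv]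
    conv_lhs => rw [hspec]
    rw [conj_mul _ _ _ hU2, diagonal_mul_diagonal]
    rw [hfdef]
    have hdiag2 : (diagonal (fun i => d i - lam * ((d i + ε)⁻¹ * d i))
        : Matrix (Fin n) (Fin n) ℝ)
        = diagonal d - lam • diagonal (fun i => (d i + ε)⁻¹ * d i) := by
      ext i j
      rcases eq_or_ne i j with rfl | hij
      · simp
      · simp [diagonal_apply_ne _ hij]
    rw [hdiag2, mul_sub, sub_mul, mul_smul_comm, smul_mul_assoc]
  -- dot product with S
  have hdotS : ∀ x y : Fin n → ℝ, x ⬝ᵥ (S *ᵥ y) = (A *ᵥ x) ⬝ᵥ (A *ᵥ y) := by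
    intro x y
    rw [hSdef, ← mulVec_mulVec, dotProduct_mulVec x Aᵀ, vecMul_transpose]
  -- quadratic bound for membership witness
  have hAx : ∀ x : Fin n → ℝ, l2 (A *ᵥ x) ^ 2 ≤ σ1 ^ 2 * l2 x ^ 2 := by
    intro x
    have e : l2 (A *ᵥ x) ^ 2 = x ⬝ᵥ (S *ᵥ x) := by
      rw [hdotS, dot_self]
    have hb := conj_bound U hU1 d (σ1 ^ 2) (by positivity)
      (fun i => by rw [abs_of_nonneg (hd0 i)]; exact hdle i) x x
    rw [← hspec] at hb
    have := le_of_abs_le hb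
    rw [e]
    calc x ⬝ᵥ (S *ᵥ x) ≤ σ1 ^ 2 * l2 x * l2 x := this
    _ = σ1 ^ 2 * l2 x ^ 2 := by ring
  -- the RIC set
  set RS : Set ℝ := {δ : ℝ | 0 ≤ δ ∧ ∀ x : Fin n → ℝ, (Function.support x).ncard ≤ k →
    (1 - δ) * l2 x ^ 2 ≤ l2 (A *ᵥ x) ^ 2 ∧ l2 (A *ᵥ x) ^ 2 ≤ (1 + δ) * l2 x ^ 2} with hRSdef
  have hRSne : RS.Nonempty := by
    refine ⟨1 + σ1 ^ 2, by positivity, fun x _ => ⟨?_, ?_⟩⟩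
    · have h1 : (1 - (1 + σ1 ^ 2)) * l2 x ^ 2 ≤ 0 := by
        nlinarith [sq_nonneg (l2 x), sq_nonneg σ1]
      have h2 : (0:ℝ) ≤ l2 (A *ᵥ x) ^ 2 := sq_nonneg _
      linarith
    · calc l2 (A *ᵥ x) ^ 2 ≤ σ1 ^ 2 * l2 x ^ 2 := hAx x
      _ ≤ (1 + (1 + σ1 ^ 2)) * l2 x ^ 2 := by nlinarith [sq_nonneg (l2 x)]
  have hRIC_eq : RIC A k = sInf RS := rfl
  have hRIC0 : 0 ≤ RIC A k := by
    rw [hRIC_eq]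
    exact Real.sInf_nonneg fun δ hδ => hδ.1
  -- t1 bound
  have ht1 : |u ⬝ᵥ v - (A *ᵥ u) ⬝ᵥ (A *ᵥ v)| ≤ RIC A k * (l2 u * l2 v) := by
    rcases eq_or_ne (l2 u) 0 with hu | hu
    · rw [eq_zero_of_l2 hu]
      simpa [mulVec_zero] using
        mul_nonneg hRIC0 (mul_nonneg (l2_nonneg _) (l2_nonneg v))
    rcases eq_or_ne (l2 v) 0 with hv | hv
    · rw [eq_zero_of_l2 hv]
      simpa [mulVec_zero] using
        mul_nonneg hRIC0 (mul_nonneg (l2_nonneg u) (l2_nonneg _))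
    have hab : 0 < l2 u * l2 v :=
      mul_pos (lt_of_le_of_ne (l2_nonneg u) (Ne.symm hu))
        (lt_of_le_of_ne (l2_nonneg v) (Ne.symm hv))
    have hle : ∀ δ ∈ RS, |u ⬝ᵥ v - (A *ᵥ u) ⬝ᵥ (A *ᵥ v)| / (l2 u * l2 v) ≤ δ := by
      intro δ hδ
      rw [div_le_iff₀ hab]
      have := rip_scaled A hδ.1 hδ.2 u v h
      linarith [this]
    have := le_csInf hRSne hle
    rw [div_le_iff₀ hab] at this
    rw [hRIC_eq]
    linarith [this]
  -- t2 bound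
  have ht2 : |u ⬝ᵥ ((S - lam • ((S + ε • (1 : Matrix (Fin n) (Fin n) ℝ))⁻¹ * S)) *ᵥ v)|
      ≤ c * (l2 u * l2 v) := by
    rw [hN]
    calc |u ⬝ᵥ ((U * diagonal f * Uᵀ) *ᵥ v)| ≤ c * l2 u * l2 v := conj_bound U hU1 f c hc hf u v
    _ = c * (l2 u * l2 v) := mul_assoc _ _ _
  -- assembly
  have hBd : (1 : Matrix (Fin n) (Fin n) ℝ) - lam • ((S + ε • 1)⁻¹ * S)
      = ((1 : Matrix (Fin n) (Fin n) ℝ) - S) + (S - lam • ((S + ε • 1)⁻¹ * S)) :=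
    (sub_add_sub_cancel _ _ _).symm
  rw [hBd, add_mulVec, dotProduct_add, sub_mulVec, one_mulVec, dotProduct_sub, hdotS]
  have hrhs : (RIC A k + σ1 ^ 2 - lam * σ1 ^ 2 / (σ1 ^ 2 + ε)) * l2 u * l2 v
      = RIC A k * (l2 u * l2 v) + c * (l2 u * l2 v) := by
    rw [hcdef]; ring
  rw [hrhs]
  exact le_trans (abs_add_le _ _) (add_le_add ht1 ht2)
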